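/- arXiv:1510.05374 — 6 statements merged into one kernel-verified Lean document; each statement's English description precedes it below -/
import Mathlib

section
/- The elements b_i := T_i T_{i+1} ⋯ T_{n-1} · T_n · T_{n-1} ⋯ T_{i+1} T_i for i = 1, …, n (so b_n = T_n) pairwise commute: b_i b_j = b_j b_i for all 1 ≤ i, j ≤ n. -/
/-!
One has `b_n = T_n` and `b_i = T_i b_{i+1} T_i` for `i < n`. By downward induction on `i`,
`b_i` commutes with every `b_j`, `j ≥ i`. For `j ≥ i + 2` this is immediate, as `T_i` commutes
with `b_j`. For `j = i + 1` it is the identity "if `s t s = t s t`, `s` commutes with `c` and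
`x = t c t` commutes with `c`, then `s x s` commutes with `x`", applied to `s = T_i`,
`t = T_{i+1}`, `c = b_{i+2}`; the start of the induction, `b_{n-1} b_n = b_n b_{n-1}`, is the
type `C` relation between `T_{n-1}` and `T_n`.
-/

/-- The ordered product `T a * T (a+1) * ⋯ * T b` (equal to `1` when `b < a`). -/
def upProd {G : Type*} [Monoid G] (T : ℕ → G) (a b : ℕ) : G :=
  ((List.range (b + 1 - a)).map fun k => T (a + k)).prod

/-- The ordered product `T b * T (b-1) * ⋯ * T a` (equal to `1` when `b < a`). -/
def downProd {G : Type*} [Monoid G] (T : ℕ → G) (b a : ℕ) : G :=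
  ((List.range (b + 1 - a)).map fun k => T (b - k)).prod

theorem commute_sandwich_of_braid {M : Type*} [Monoid M] {s t c : M} (hst : s * t * s = t * s * t)
    (hsc : Commute s c) (htc : Commute (t * c * t) c) :
    Commute (s * (t * c * t) * s) (t * c * t) := by
  have braid : t * (s * t) = s * (t * s) := by simp only [← mul_assoc, hst]
  have braid' (x : M) : t * (s * (t * x)) = s * (t * (s * x)) := by
    simp only [← mul_assoc, hst]
  have htc' (x : M) : t * (c * (t * (c * x))) = c * (t * (c * (t * x))) := by
    simpa only [mul_assoc] using congrArg (· * x) htc.eq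
  calc s * (t * c * t) * s * (t * c * t)
      = s * t * c * s * t * s * c * t := by simp only [mul_assoc]; rw [braid']
    _ = s * t * s * c * t * c * s * t := by
        simp only [mul_assoc]; rw [← hsc.left_comm, hsc.left_comm t]
    _ = t * s * t * c * t * c * s * t := by simp only [mul_assoc]; rw [← braid']
    _ = t * s * c * t * c * t * s * t := by simp only [mul_assoc]; rw [htc']
    _ = t * c * s * t * c * t * s * t := by simp only [mul_assoc]; rw [hsc.left_comm]
    _ = t * c * s * t * c * s * t * s := by simp only [mul_assoc]; rw [braid]
    _ = t * c * t * (s * (t * c * t) * s) := by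
        simp only [mul_assoc]; rw [← hsc.left_comm (t * s), ← braid']

section Products

variable {M : Type*} [Monoid M] (T : ℕ → M) {a b : ℕ}

theorem upProd_of_lt (h : b < a) : upProd T a b = 1 := by
  simp [upProd, Nat.sub_eq_zero_of_le h]

theorem downProd_of_lt (h : b < a) : downProd T b a = 1 := by
  simp [downProd, Nat.sub_eq_zero_of_le h]

theorem upProd_eq_mul (h : a ≤ b) : upProd T a b = T a * upProd T (a + 1) b := by
  rw [upProd, upProd, show b + 1 - a = b + 1 - (a + 1) + 1 by omega, List.range_succ_eq_map]
  simp only [List.map_cons, List.map_map, List.prod_cons, Nat.add_zero]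
  congr 3
  funext k
  simp only [Function.comp_apply, Nat.succ_eq_add_one, Nat.add_assoc, Nat.add_comm 1]

theorem downProd_eq_mul (h : a ≤ b) : downProd T b a = downProd T b (a + 1) * T a := by
  rw [downProd, downProd, show b + 1 - a = b + 1 - (a + 1) + 1 by omega, List.range_succ,
    List.map_append, List.prod_append]
  simp only [List.map_cons, List.map_nil, List.prod_cons, List.prod_nil, mul_one]
  rw [show b - (b + 1 - (a + 1)) = a by omega]

variable {T} {x : M}

theorem Commute.upProd_right (h : ∀ m, a ≤ m → m ≤ b → Commute x (T m)) :
    Commute x (upProd T a b) :=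
  Commute.list_prod_right _ _ fun _ hy ↦ by
    obtain ⟨k, hk, rfl⟩ := List.mem_map.1 hy
    have := List.mem_range.1 hk
    exact h _ (by omega) (by omega)

theorem Commute.downProd_right (h : ∀ m, a ≤ m → m ≤ b → Commute x (T m)) :
    Commute x (downProd T b a) :=
  Commute.list_prod_right _ _ fun _ hy ↦ by
    obtain ⟨k, hk, rfl⟩ := List.mem_map.1 hy
    have := List.mem_range.1 hk
    exact h _ (by omega) (by omega)

end Products

section JucysMurphy

variable {M : Type*} [Monoid M] {T : ℕ → M} {n i j : ℕ}

def jucysMurphyB (T : ℕ → M) (n i : ℕ) : M :=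
  upProd T i (n - 1) * T n * downProd T (n - 1) i

theorem jucysMurphyB_self (hn : 0 < n) : jucysMurphyB T n n = T n := by
  rw [jucysMurphyB, upProd_of_lt T (by omega), downProd_of_lt T (by omega), one_mul, mul_one]

theorem jucysMurphyB_eq_mul (hi : i < n) :
    jucysMurphyB T n i = T i * jucysMurphyB T n (i + 1) * T i := by
  rw [jucysMurphyB, jucysMurphyB, upProd_eq_mul T (by omega), downProd_eq_mul T (by omega)]
  simp only [mul_assoc]

theorem Commute.jucysMurphyB_right {x : M} (hj : j ≤ n)
    (h : ∀ m, j ≤ m → m ≤ n → Commute x (T m)) :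
    Commute x (jucysMurphyB T n j) :=
  ((Commute.upProd_right fun m hm hm' ↦ h m hm (by omega)).mul_right (h n hj le_rfl)).mul_right
    (Commute.downProd_right fun m hm hm' ↦ h m hm (by omega))

theorem commute_jucysMurphyB_pred_self (hn : 0 < n)
    (hCn : T (n - 1) * T n * T (n - 1) * T n = T n * T (n - 1) * T n * T (n - 1)) :
    Commute (jucysMurphyB T n (n - 1)) (jucysMurphyB T n n) := by
  rw [jucysMurphyB_eq_mul (by omega), Nat.sub_add_cancel hn, jucysMurphyB_self hn]
  simpa only [Commute, SemiconjBy, mul_assoc] using hCn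

theorem commute_jucysMurphyB
    (hbraid : ∀ i, 1 ≤ i → i ≤ n - 2 → T i * T (i + 1) * T i = T (i + 1) * T i * T (i + 1))
    (hcomm : ∀ i j, i ≤ n → j ≤ n → i + 2 ≤ j → T i * T j = T j * T i)
    (hCn : T (n - 1) * T n * T (n - 1) * T n = T n * T (n - 1) * T n * T (n - 1))
    (hi : 1 ≤ i) (hij : i ≤ j) (hjn : j ≤ n) :
    Commute (jucysMurphyB T n i) (jucysMurphyB T n j) := by
  set B := jucysMurphyB T n
  have hTB (k l : ℕ) (hkl : k + 2 ≤ l) (hl : l ≤ n) : Commute (T k) (B l) :=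
    Commute.jucysMurphyB_right hl fun m hm hmn ↦ hcomm k m (by omega) hmn (by omega)
  induction hij.trans hjn using Nat.decreasingInduction generalizing j with
  | self => rw [le_antisymm hjn hij]
  | of_succ k hk ih =>
    have hBk : B k = T k * B (k + 1) * T k := jucysMurphyB_eq_mul hk
    obtain rfl | rfl | hkj : j = k ∨ j = k + 1 ∨ k + 2 ≤ j := by omega
    · rfl
    · obtain rfl | hkn : k + 1 = n ∨ k + 2 ≤ n := by omega
      · simpa using commute_jucysMurphyB_pred_self k.succ_pos hCn
      · have hB1 : B (k + 1) = T (k + 1) * B (k + 2) * T (k + 1) := jucysMurphyB_eq_mul hkn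
        have h12 : Commute (B (k + 1)) (B (k + 2)) := ih (by omega) (by omega) hkn
        rw [hB1] at h12
        rw [hBk, hB1]
        exact commute_sandwich_of_braid (hbraid k hi (by omega)) (hTB k (k + 2) le_rfl hkn) h12
    · rw [hBk]
      have hTk := hTB k j hkj hjn
      exact (hTk.mul_left (ih (by omega) (by omega) hjn)).mul_left hTk

end JucysMurphy

theorem jucys_murphy_b_commute_general {G : Type*} [Group G] (n : ℕ) (T : ℕ → G)
    (hbraid : ∀ i, 1 ≤ i → i ≤ n - 2 →
      T i * T (i + 1) * T i = T (i + 1) * T i * T (i + 1))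
    (hcomm : ∀ i j, i ≤ n → j ≤ n → i + 2 ≤ j → T i * T j = T j * T i)
    (hCn : T (n - 1) * T n * T (n - 1) * T n = T n * T (n - 1) * T n * T (n - 1)) :
    ∀ i j, 1 ≤ i → i ≤ n → 1 ≤ j → j ≤ n →
      (upProd T i (n - 1) * T n * downProd T (n - 1) i) *
        (upProd T j (n - 1) * T n * downProd T (n - 1) j) =
      (upProd T j (n - 1) * T n * downProd T (n - 1) j) *
        (upProd T i (n - 1) * T n * downProd T (n - 1) i) := by
  intro i j hi hin hj hjn
  rcases le_total i j with hij | hji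
  · exact (commute_jucysMurphyB hbraid hcomm hCn hi hij hjn).eq
  · exact (commute_jucysMurphyB hbraid hcomm hCn hj hji hin).symm.eq

/-- The Jucys–Murphy type elements
`b_i = T_i T_{i+1} ⋯ T_{n-1} · T_n · T_{n-1} ⋯ T_{i+1} T_i` in the affine braid group
of type `C⁽¹⁾` pairwise commute. -/
theorem jucys_murphy_b_commute {G : Type*} [Group G] (n : ℕ) (hn : 2 ≤ n) (T : ℕ → G)
    (hbraid : ∀ i, 1 ≤ i → i ≤ n - 2 →
      T i * T (i + 1) * T i = T (i + 1) * T i * T (i + 1))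
    (hcomm : ∀ i j, i ≤ n → j ≤ n → i + 2 ≤ j → T i * T j = T j * T i)
    (hC0 : T 1 * T 0 * T 1 * T 0 = T 0 * T 1 * T 0 * T 1)
    (hCn : T (n - 1) * T n * T (n - 1) * T n = T n * T (n - 1) * T n * T (n - 1)) :
    ∀ i j, 1 ≤ i → i ≤ n → 1 ≤ j → j ≤ n →
      (upProd T i (n - 1) * T n * downProd T (n - 1) i) *
        (upProd T j (n - 1) * T n * downProd T (n - 1) j) =
      (upProd T j (n - 1) * T n * downProd T (n - 1) j) *
        (upProd T i (n - 1) * T n * downProd T (n - 1) i) :=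
  jucys_murphy_b_commute_general n T hbraid hcomm hCn
end

section
/- The element T̃_0 := T_{-1} T_0 satisfies the C-type relation T̃_0 T_1 T̃_0 T_1 = T_1 T̃_0 T_1 T̃_0. -/
theorem Commute.mul_braid_four_of_braid_three {M : Type*} [Semigroup M] {a b c : M}
    (hab : Commute a b) (hac : a * c * a = c * a * c) (hbc : b * c * b = c * b * c) :
    a * b * c * (a * b) * c = c * (a * b) * c * (a * b) := by
  have hac_tail (t : M) : a * (c * (a * t)) = c * (a * (c * t)) := by
    simp only [← mul_assoc, hac]
  have hbc_tail (t : M) : b * (c * (b * t)) = c * (b * (c * t)) := by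
    simp only [← mul_assoc, hbc]
  have hac' : a * (c * a) = c * (a * c) := by simpa only [mul_assoc] using hac
  simp only [mul_assoc]
  calc a * (b * (c * (a * (b * c))))
      = a * (b * (c * (b * (a * c)))) := by rw [hab.left_comm c]
    _ = a * (c * (b * (c * (a * c)))) := by rw [hbc_tail]
    _ = a * (c * (b * (a * (c * a)))) := by rw [← hac']
    _ = a * (c * (a * (b * (c * a)))) := by rw [← hab.left_comm (c * a)]
    _ = c * (a * (c * (b * (c * a)))) := by rw [hac_tail]
    _ = c * (a * (b * (c * (b * a)))) := by rw [← hbc_tail]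
    _ = c * (a * (b * (c * (a * b)))) := by rw [← hab.eq]

/-- In the affine braid group of type `B⁽¹⁾`, the element `T̃_0 = T_{-1} T_0` satisfies the
`C`-type four-term braid relation with `T_1`. Here `Tm1`, `T0`, `T1` play the roles of
`T_{-1}`, `T_0`, `T_1`. -/
theorem Ttilde0_C_relation {G : Type*} [Group G] (Tm1 T0 T1 : G)
    (h01 : T0 * T1 * T0 = T1 * T0 * T1)
    (hm1 : Tm1 * T1 * Tm1 = T1 * Tm1 * T1)
    (hm0 : Tm1 * T0 = T0 * Tm1) :
    (Tm1 * T0) * T1 * (Tm1 * T0) * T1 = T1 * (Tm1 * T0) * T1 * (Tm1 * T0) :=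
  Commute.mul_braid_four_of_braid_three hm0 hm1 h01
end

section
/- The element T̃_n := T_n T_{n+1} satisfies the C-type relation T̃_n T_{n-1} T̃_n T_{n-1} = T_{n-1} T̃_n T_{n-1} T̃_n. -/
theorem Commute.braid_four_mul_of_braid {M : Type*} [Monoid M] {a b c : M}
    (hab : a * b * a = b * a * b) (hac : a * c * a = c * a * c) (hbc : Commute b c) :
    b * c * a * (b * c) * a = a * (b * c) * a * (b * c) := by
  have hbc : b * c = c * b := hbc.eq
  calc b * c * a * (b * c) * a = b * c * a * c * b * a := by
        simpa only [mul_assoc] using congrArg (b * c * a * · * a) hbc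
    _ = b * a * c * a * b * a := by
        simpa only [mul_assoc] using congrArg (b * · * b * a) hac.symm
    _ = b * a * c * b * a * b := by
        simpa only [mul_assoc] using congrArg (b * a * c * ·) hab
    _ = b * a * b * c * a * b := by
        simpa only [mul_assoc] using congrArg (b * a * · * a * b) hbc.symm
    _ = a * b * a * c * a * b := by
        simpa only [mul_assoc] using congrArg (· * c * a * b) hab.symm
    _ = a * b * c * a * c * b := by
        simpa only [mul_assoc] using congrArg (a * b * · * b) hac
    _ = a * (b * c) * a * (b * c) := by
        simpa only [mul_assoc] using congrArg (a * b * c * a * ·) hbc.symm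

/-- In the affine braid group of type `D⁽¹⁾`, the element `T̃_n = T_n T_{n+1}` satisfies the
`C`-type four-term braid relation with `T_{n-1}`. Here `Tnm1`, `Tn`, `Tnp1` play the roles of
`T_{n-1}`, `T_n`, `T_{n+1}`. -/
theorem TtildeN_C_relation {G : Type*} [Group G] (Tnm1 Tn Tnp1 : G)
    (h1 : Tnm1 * Tn * Tnm1 = Tn * Tnm1 * Tn)
    (h2 : Tnm1 * Tnp1 * Tnm1 = Tnp1 * Tnm1 * Tnp1)
    (h3 : Tn * Tnp1 = Tnp1 * Tn) :
    (Tn * Tnp1) * Tnm1 * (Tn * Tnp1) * Tnm1 = Tnm1 * (Tn * Tnp1) * Tnm1 * (Tn * Tnp1) :=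
  Commute.braid_four_mul_of_braid h1 h2 h3
end

section
/- The element Z := (T_0 T_1 ⋯ T_{n-1}) · (T_0 T_1 ⋯ T_{n-2}) ⋯ (T_0 T_1) · T_0 · U satisfies: Z T_i = T_i Z for all 1 ≤ i ≤ n-1; Z X = X Z, where X := T_0 T_1 ⋯ T_n; and Z² = J_1 J_2 ⋯ J_n · U², where J_i := (T_{i-1}^{-1} ⋯ T_1^{-1})(T_0 T_1 ⋯ T_n)(T_{n-1} ⋯ T_i). -/
/-- The element `Z = (T_0 ⋯ T_{n-1})(T_0 ⋯ T_{n-2}) ⋯ (T_0 T_1) T_0 U`. -/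
def Zelt {G : Type*} [Monoid G] (T : ℕ → G) (U : G) (n : ℕ) : G :=
  ((List.range n).map fun m => upProd T 0 (n - 1 - m)).prod * U

/-- The element `J_i = (T_{i-1}⁻¹ ⋯ T_1⁻¹)(T_0 T_1 ⋯ T_n)(T_{n-1} ⋯ T_i)`. -/
def Jelt {G : Type*} [Group G] (T : ℕ → G) (n i : ℕ) : G :=
  downProd (fun k => (T k)⁻¹) (i - 1) 1 * upProd T 0 n * downProd T (n - 1) i

theorem SemiconjBy.list_prod_map {M ι : Type*} [Monoid M] {a : M} {f g : ι → M} (l : List ι)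
    (h : ∀ x ∈ l, SemiconjBy a (f x) (g x)) :
    SemiconjBy a (l.map f).prod (l.map g).prod := by
  induction l with
  | nil => exact SemiconjBy.one_right a
  | cons x l ih =>
    simpa using (h x (by simp)).mul_right (ih fun y hy => h y (by simp [hy]))

section Monoid

variable {G : Type*} [Monoid G] (T : ℕ → G)

theorem upProd_mul_upProd {a b c : ℕ} (hab : a ≤ b + 1) (hbc : b ≤ c) :
    upProd T a b * upProd T (b + 1) c = upProd T a c := by
  simp only [upProd, ← List.prod_append,
    show c + 1 - a = (b + 1 - a) + (c + 1 - (b + 1)) by omega, List.range_add, List.map_append, List.map_map]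
  congr 2
  exact List.map_congr_left fun k _ => by simp only [Function.comp]; congr 1; omega

theorem upProd_self (a : ℕ) : upProd T a a = T a := by
  simp [upProd]

theorem upProd_succ {a b : ℕ} (h : a ≤ b + 1) : upProd T a (b + 1) = upProd T a b * T (b + 1) := by
  rw [← upProd_mul_upProd T h b.le_succ, upProd_self]

theorem downProd_mul_downProd {a b c : ℕ} (hab : a ≤ b + 1) (hbc : b ≤ c) :
    downProd T c (b + 1) * downProd T b a = downProd T c a := by
  simp only [downProd, ← List.prod_append,
    show c + 1 - a = (c + 1 - (b + 1)) + (b + 1 - a) by omega, List.range_add, List.map_append, List.map_map]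
  congr 2
  exact List.map_congr_left fun k _ => by simp only [Function.comp]; congr 1; omega

theorem downProd_self (a : ℕ) : downProd T a a = T a := by
  simp [downProd]

theorem downProd_succ {a b : ℕ} (h : a ≤ b + 1) :
    downProd T (b + 1) a = T (b + 1) * downProd T b a := by
  rw [← downProd_mul_downProd T h b.le_succ, downProd_self]

theorem downProd_eq_downProd_mul {a b : ℕ} (h : a ≤ b) :
    downProd T b a = downProd T b (a + 1) * T a := by
  rw [← downProd_mul_downProd T a.le_succ h, downProd_self]

theorem upProd_sub_eq_downProd {n b : ℕ} (hb : b ≤ n) :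
    upProd (fun i => T (n - i)) 0 b = downProd T n (n - b) := by
  simp [upProd, downProd, show n + 1 - (n - b) = b + 1 by omega]

theorem commute_upProd {g : G} {a b : ℕ} (h : ∀ k, a ≤ k → k ≤ b → Commute g (T k)) :
    Commute g (upProd T a b) :=
  Commute.list_prod_right _ _ <| by
    simpa using fun k hk => h (a + k) (by omega) (by omega)

theorem commute_downProd {g : G} {a b : ℕ} (h : ∀ k, a ≤ k → k ≤ b → Commute g (T k)) :
    Commute g (downProd T b a) :=
  Commute.list_prod_right _ _ <| by
    simpa using fun k hk => h (b - k) (by omega) (by omega)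

theorem semiconjBy_upProd {g : G} {T' : ℕ → G} {a b : ℕ}
    (h : ∀ k, a ≤ k → k ≤ b → SemiconjBy g (T k) (T' k)) :
    SemiconjBy g (upProd T a b) (upProd T' a b) :=
  SemiconjBy.list_prod_map _ <| by
    simpa using fun k hk => h (a + k) (by omega) (by omega)

end Monoid

section Stair

variable {G : Type*} [Monoid G] (T : ℕ → G)

/-- `stairProd T n j = u_{n-1} u_{n-2} ⋯ u_{n-j}` with `u_k = T_0 T_1 ⋯ T_k`, so that
`Zelt T U n = stairProd T n n * U`. -/
def stairProd (n j : ℕ) : G :=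
  ((List.range j).map fun r => upProd T 0 (n - 1 - r)).prod

@[simp]
theorem stairProd_zero (n : ℕ) : stairProd T n 0 = 1 := rfl

theorem stairProd_add (n a b : ℕ) :
    stairProd T n (a + b) = stairProd T n a * stairProd T (n - a) b := by
  simp only [stairProd, List.range_add, List.map_append, List.prod_append, List.map_map]
  congr 2
  exact List.map_congr_left fun k _ => by simp only [Function.comp]; congr 1; omega

theorem stairProd_succ (n j : ℕ) :
    stairProd T n (j + 1) = stairProd T n j * upProd T 0 (n - 1 - j) := by
  rw [stairProd_add, Nat.sub_right_comm]
  simp [stairProd]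

theorem stairProd_succ_self (m : ℕ) :
    stairProd T (m + 1) (m + 1) = upProd T 0 m * stairProd T m m := by
  rw [add_comm m 1, stairProd_add]
  simp [stairProd]

theorem semiconjBy_stairProd {g : G} {T' : ℕ → G} {n : ℕ}
    (h : ∀ k, k ≤ n → SemiconjBy g (T k) (T' k)) (j : ℕ) :
    SemiconjBy g (stairProd T n j) (stairProd T' n j) :=
  SemiconjBy.list_prod_map _ fun _ _ => semiconjBy_upProd T fun k _ hk => h k (by omega)

end Stair

section Relations

variable {G : Type*} [Monoid G]

/-- All defining relations of `B_n(C^{(1)})` except the quartic one at the node `n`, which the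
reflection `i ↦ n - i` exchanges with the quartic one at `0`. -/
structure CBraidRels (n : ℕ) (T : ℕ → G) : Prop where
  braid : ∀ i, 1 ≤ i → i + 2 ≤ n → T i * T (i + 1) * T i = T (i + 1) * T i * T (i + 1)
  comm : ∀ i j, i ≤ n → j ≤ n → i + 2 ≤ j → T i * T j = T j * T i
  quartic_zero : T 1 * T 0 * T 1 * T 0 = T 0 * T 1 * T 0 * T 1

namespace CBraidRels

variable {n : ℕ} {T : ℕ → G} (R : CBraidRels n T)
include R

theorem commute_of_far {i j : ℕ} (hi : i ≤ n) (hj : j ≤ n) (h : i + 2 ≤ j ∨ j + 2 ≤ i) :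
    Commute (T i) (T j) := by
  rcases h with h | h
  · exact R.comm i j hi hj h
  · exact (R.comm j i hj hi h).symm

theorem commute_upProd {j a b : ℕ} (hb : b ≤ n) (hj : j ≤ n) (h : b + 2 ≤ j ∨ j + 2 ≤ a) :
    Commute (T j) (upProd T a b) :=
  _root_.commute_upProd T fun _ _ _ => R.commute_of_far hj (by omega) (by omega)

theorem commute_downProd {j a b : ℕ} (hb : b ≤ n) (hj : j ≤ n) (h : b + 2 ≤ j ∨ j + 2 ≤ a) :
    Commute (T j) (downProd T b a) :=
  _root_.commute_downProd T fun _ _ _ => R.commute_of_far hj (by omega) (by omega)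

theorem semiconjBy_upProd {a b i : ℕ} (hai : a ≤ i) (hi : 1 ≤ i) (hib : i + 1 ≤ b) (hbn : b ≤ n)
    (hin : i + 2 ≤ n) : SemiconjBy (upProd T a b) (T i) (T (i + 1)) := by
  obtain ⟨i, rfl⟩ : ∃ i', i = i' + 1 := ⟨i - 1, by omega⟩
  have hsplit : upProd T a b = upProd T a i * (T (i + 1) * T (i + 2)) * upProd T (i + 3) b := by
    rw [← mul_assoc, ← upProd_succ T (by omega), ← upProd_succ T (by omega),
      upProd_mul_upProd T (by omega) (by omega)]
  have hbraid : SemiconjBy (T (i + 1) * T (i + 2)) (T (i + 1)) (T (i + 2)) := by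
    rw [SemiconjBy, R.braid (i + 1) hi hin, mul_assoc]
  rw [hsplit]
  exact SemiconjBy.mul_left
    (SemiconjBy.mul_left (R.commute_upProd (by omega) (by omega) (Or.inl le_rfl)).symm hbraid)
    (R.commute_upProd hbn (by omega) (Or.inr le_rfl)).symm

theorem semiconjBy_downProd {a b i : ℕ} (hai : a ≤ i) (hi : 1 ≤ i) (hib : i + 1 ≤ b)
    (hbn : b ≤ n) (hin : i + 2 ≤ n) : SemiconjBy (downProd T b a) (T (i + 1)) (T i) := by
  obtain ⟨i, rfl⟩ : ∃ i', i = i' + 1 := ⟨i - 1, by omega⟩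
  have hsplit :
      downProd T b a = downProd T b (i + 3) * (T (i + 2) * T (i + 1)) * downProd T i a := by
    rw [mul_assoc, mul_assoc, ← downProd_succ T (by omega), ← downProd_succ T (by omega),
      downProd_mul_downProd T (by omega) (by omega)]
  have hbraid : SemiconjBy (T (i + 2) * T (i + 1)) (T (i + 2)) (T (i + 1)) := by
    rw [SemiconjBy, ← R.braid (i + 1) hi hin, mul_assoc]
  rw [hsplit]
  exact SemiconjBy.mul_left
    (SemiconjBy.mul_left (R.commute_downProd hbn (by omega) (Or.inr le_rfl)).symm hbraid)
    (R.commute_downProd (by omega) (by omega) (Or.inl le_rfl)).symm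

theorem upProd_mul_self {m : ℕ} (hm : m + 2 ≤ n) :
    upProd T 0 (m + 1) * upProd T 0 (m + 1) = T 1 * upProd T 0 (m + 1) * upProd T 0 m := by
  induction m with
  | zero =>
    simp only [upProd_succ T (Nat.zero_le 1), upProd_self, ← mul_assoc]
    exact R.quartic_zero.symm
  | succ m ih =>
    have hc : Commute (T (m + 2)) (upProd T 0 m) :=
      R.commute_upProd (by omega) (by omega) (Or.inl le_rfl)
    calc upProd T 0 (m + 2) * upProd T 0 (m + 2)
        = upProd T 0 (m + 1) * (T (m + 2) * upProd T 0 m) * T (m + 1) * T (m + 2) := by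
          rw [upProd_succ T (by omega : 0 ≤ m + 1 + 1), upProd_succ T (by omega : 0 ≤ m + 1)]
          simp only [mul_assoc]
      _ = upProd T 0 (m + 1) * upProd T 0 m * (T (m + 2) * T (m + 1) * T (m + 2)) := by
          rw [hc.eq]; simp only [mul_assoc]
      _ = upProd T 0 (m + 1) * upProd T 0 (m + 1) * (T (m + 2) * T (m + 1)) := by
          rw [← R.braid (m + 1) (by omega) hm, upProd_succ T (by omega : 0 ≤ m + 1)]
          simp only [mul_assoc]
      _ = T 1 * upProd T 0 (m + 1) * (upProd T 0 m * T (m + 2)) * T (m + 1) := by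
          rw [ih (by omega)]; simp only [mul_assoc]
      _ = T 1 * upProd T 0 (m + 2) * upProd T 0 (m + 1) := by
          rw [← hc.eq, upProd_succ T (by omega : 0 ≤ m + 1 + 1),
            upProd_succ T (by omega : 0 ≤ m + 1)]
          simp only [mul_assoc]

theorem reflect
    (hCn : T (n - 1) * T n * T (n - 1) * T n = T n * T (n - 1) * T n * T (n - 1)) :
    CBraidRels n (fun i => T (n - i)) where
  braid i hi hin := by
    obtain ⟨j, hj, hj'⟩ : ∃ j, n - i = j + 1 ∧ n - (i + 1) = j := ⟨n - i - 1, by omega, by omega⟩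
    simp only [hj, hj']
    exact (R.braid j (by omega) (by omega)).symm
  comm i j hi hj hij := (R.comm (n - j) (n - i) (by omega) (by omega) (by omega)).symm
  quartic_zero := by simpa using hCn

theorem semiconjBy_stairProd_add (j : ℕ) {i : ℕ} (hi : 1 ≤ i) (hij : i + j + 1 ≤ n) :
    SemiconjBy (stairProd T n j) (T i) (T (i + j)) := by
  induction j generalizing i with
  | zero => exact SemiconjBy.one_left _
  | succ j ih =>
    rw [stairProd_succ, ← add_assoc, add_right_comm]
    exact (ih (by omega) (by omega)).mul_left
      (R.semiconjBy_upProd (Nat.zero_le i) hi (by omega) (by omega) (by omega))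

theorem semiconjBy_stairProd_sub {j : ℕ} (hj : 2 ≤ j) (hjn : j ≤ n) :
    SemiconjBy (stairProd T n j) (T (n + 1 - j)) (T (j - 1)) := by
  obtain ⟨k, rfl⟩ : ∃ k, j = k + 2 := ⟨j - 2, by omega⟩
  obtain ⟨m, rfl⟩ : ∃ m, n = m + k + 2 := ⟨n - k - 2, by omega⟩
  have hu : upProd T 0 m * T (m + 1) = upProd T 0 (m + 1) := (upProd_succ T (by omega)).symm
  have hP : stairProd T (m + k + 2) (k + 2) =
      stairProd T (m + k + 2) k * upProd T 0 (m + 1) * upProd T 0 m := by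
    rw [stairProd_succ, stairProd_succ, show m + k + 2 - 1 - k = m + 1 by omega,
      show m + k + 2 - 1 - (k + 1) = m by omega]
  rw [SemiconjBy, hP, show m + k + 2 + 1 - (k + 2) = m + 1 by omega,
    show k + 2 - 1 = k + 1 by omega]
  calc stairProd T (m + k + 2) k * upProd T 0 (m + 1) * upProd T 0 m * T (m + 1)
      = stairProd T (m + k + 2) k * T 1 * (upProd T 0 (m + 1) * upProd T 0 m) := by
        rw [mul_assoc _ (upProd T 0 m), hu, mul_assoc, R.upProd_mul_self (by omega)]
        simp only [mul_assoc]
    _ = T (k + 1) * (stairProd T (m + k + 2) k * upProd T 0 (m + 1) * upProd T 0 m) := by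
        rw [(R.semiconjBy_stairProd_add k le_rfl (by omega)).eq, add_comm 1 k]
        simp only [mul_assoc]

theorem commute_stairProd_self {m : ℕ} (hm : m + 1 ≤ n) :
    Commute (T (m + 1)) (stairProd T m m) :=
  Commute.list_prod_right _ _ <| by
    simpa using fun r hr => R.commute_upProd (by omega) hm (Or.inl (by omega))

theorem semiconjBy_stairProd_self {i : ℕ} (hi : 1 ≤ i) (hin : i + 1 ≤ n) :
    SemiconjBy (stairProd T n n) (T i) (T (n - i)) := by
  obtain ⟨m, rfl⟩ : ∃ m, i = m + 1 := ⟨i - 1, by omega⟩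
  have hsplit := stairProd_add T n (n - m) m
  rw [Nat.sub_add_cancel (by omega : m ≤ n), show n - (n - m) = m by omega] at hsplit
  have hP := R.semiconjBy_stairProd_sub (j := n - m) (by omega) (by omega)
  rw [show n + 1 - (n - m) = m + 1 by omega, show n - m - 1 = n - (m + 1) by omega] at hP
  rw [hsplit]
  exact hP.mul_left (R.commute_stairProd_self (by omega)).symm

theorem stairProd_self_mul_downProd {m : ℕ} (hm : m ≤ n) :
    stairProd T m m * downProd T m 0 = upProd T 0 m * stairProd T m m := by
  induction m with
  | zero => simp [upProd_self, downProd_self]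
  | succ m ih =>
    rw [stairProd_succ_self, downProd_succ T (Nat.zero_le _), mul_assoc,
      ← mul_assoc (stairProd T m m), ← (R.commute_stairProd_self hm).eq, mul_assoc, ih (by omega),
      ← mul_assoc, ← mul_assoc, ← upProd_succ T (Nat.zero_le _), mul_assoc]

section

variable (hCn : T (n - 1) * T n * T (n - 1) * T n = T n * T (n - 1) * T n * T (n - 1))
include hCn

theorem commute_upProd_mul_downProd {j k : ℕ} (hk : 1 ≤ k) (hkj : k + 1 ≤ j) (hjn : j ≤ n) :
    Commute (T j) (upProd T 0 n * downProd T (n - 1) k) := by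
  rcases hjn.lt_or_eq with hjn | rfl
  · obtain ⟨i, rfl⟩ : ∃ i, j = i + 1 := ⟨j - 1, by omega⟩
    exact ((R.semiconjBy_upProd (Nat.zero_le i) (by omega) (by omega) le_rfl (by omega)).mul_left
      (R.semiconjBy_downProd (by omega) (by omega) (by omega) (by omega) (by omega))).symm
  · obtain ⟨m, rfl⟩ : ∃ m, j = m + 2 := ⟨j - 2, by omega⟩
    simp only [show m + 2 - 1 = m + 1 by omega] at hCn ⊢
    have hu : upProd T 0 (m + 2) = upProd T 0 m * T (m + 1) * T (m + 2) := by
      rw [upProd_succ T (by omega : 0 ≤ m + 1 + 1), upProd_succ T (by omega : 0 ≤ m + 1)]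
    have hc₁ : Commute (T (m + 2)) (upProd T 0 m) :=
      R.commute_upProd (by omega) (by omega) (Or.inl le_rfl)
    have hc₂ : Commute (T (m + 2)) (downProd T m k) :=
      R.commute_downProd (by omega) (by omega) (Or.inl le_rfl)
    rw [Commute, SemiconjBy, hu, downProd_succ T (by omega : k ≤ m + 1)]
    calc T (m + 2) * (upProd T 0 m * T (m + 1) * T (m + 2) * (T (m + 1) * downProd T m k))
        = upProd T 0 m * (T (m + 2) * T (m + 1) * T (m + 2) * T (m + 1)) * downProd T m k := by
          simp only [mul_assoc, hc₁.left_comm]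
      _ = upProd T 0 m * T (m + 1) * T (m + 2) * (T (m + 1) * downProd T m k) * T (m + 2) := by
          rw [← hCn]
          simp only [mul_assoc, hc₂.eq]

end

end CBraidRels

end Relations

section Group

variable {G : Type*} [Group G] {n : ℕ} {T : ℕ → G}

theorem Jelt_one : Jelt T n 1 = upProd T 0 n * downProd T (n - 1) 1 := by
  simp [Jelt, downProd]

theorem Jelt_succ {i : ℕ} (hi : 1 ≤ i) (hin : i + 1 ≤ n) :
    Jelt T n (i + 1) = (T i)⁻¹ * Jelt T n i * (T i)⁻¹ := by
  obtain ⟨i, rfl⟩ : ∃ i', i = i' + 1 := ⟨i - 1, by omega⟩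
  rw [Jelt, Jelt, Nat.add_sub_cancel, downProd_succ _ hi,
    downProd_eq_downProd_mul T (a := i + 1) (by omega)]
  simp only [Nat.add_sub_cancel, mul_assoc, mul_inv_cancel, mul_one]

namespace CBraidRels

variable (R : CBraidRels n T)
  (hCn : T (n - 1) * T n * T (n - 1) * T n = T n * T (n - 1) * T n * T (n - 1))
include R hCn

theorem commute_Jelt {j k : ℕ} (hk : 1 ≤ k) (hkj : k + 1 ≤ j) (hjn : j ≤ n) :
    Commute (T j) (Jelt T n k) := by
  have hinv : Commute (T j) (downProd (fun l => (T l)⁻¹) (k - 1) 1) :=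
    _root_.commute_downProd _ fun _ _ _ =>
      (R.commute_of_far hjn (by omega) (Or.inr (by omega))).inv_right
  rw [Jelt, mul_assoc]
  exact hinv.mul_right (R.commute_upProd_mul_downProd hCn hk hkj hjn)

theorem stairProd_reflect_mul_Jelt {k : ℕ} (hk : k + 1 ≤ n) :
    stairProd (fun i => T (n - i)) n k * Jelt T n (k + 1) =
      upProd T 0 (n - 1 - k) * stairProd (fun i => T (n - i)) n (k + 1) := by
  induction k with
  | zero =>
    rw [stairProd_zero, one_mul, stairProd_succ, stairProd_zero, one_mul, Jelt_one,
      upProd_sub_eq_downProd T (by omega)]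
    obtain ⟨m, rfl⟩ : ∃ m, n = m + 1 := ⟨n - 1, by omega⟩
    rw [show m + 1 - 1 - 0 = m by omega, show m + 1 - m = 1 by omega, Nat.add_sub_cancel,
      upProd_succ T (Nat.zero_le _), downProd_succ T hk, mul_assoc]
  | succ k ih =>
    set T' : ℕ → G := fun i => T (n - i)
    have hu' : upProd T' 0 (n - 1 - k) = downProd T n (k + 2) * T (k + 1) := by
      rw [upProd_sub_eq_downProd T (by omega), show n - (n - 1 - k) = k + 1 by omega,
        downProd_eq_downProd_mul T (by omega)]
    have hu'' : upProd T' 0 (n - 1 - (k + 1)) = downProd T n (k + 2) := by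
      rw [upProd_sub_eq_downProd T (by omega), show n - (n - 1 - (k + 1)) = k + 2 by omega]
    have hu : upProd T 0 (n - 1 - k) = upProd T 0 (n - 1 - (k + 1)) * T (n - 1 - k) := by
      have h := upProd_succ T (a := 0) (b := n - 1 - (k + 1)) (Nat.zero_le _)
      rwa [show n - 1 - (k + 1) + 1 = n - 1 - k by omega] at h
    have hJ : Commute (Jelt T n (k + 1)) (downProd T n (k + 2)) :=
      _root_.commute_downProd T fun _ _ _ =>
        (R.commute_Jelt hCn (by omega) (by omega) (by omega)).symm
    have hsemi : SemiconjBy (stairProd T' n (k + 2)) (T (k + 1)) (T (n - 1 - k)) := by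
      have := (R.reflect hCn).semiconjBy_stairProd_sub (j := k + 2) (by omega) (by omega)
      beta_reduce at this
      rwa [show n - (n + 1 - (k + 2)) = k + 1 by omega,
        show n - (k + 2 - 1) = n - 1 - k by omega] at this
    calc stairProd T' n (k + 1) * Jelt T n (k + 2)
        = stairProd T' n k * Jelt T n (k + 1) * downProd T n (k + 2) * (T (k + 1))⁻¹ := by
          rw [stairProd_succ, Jelt_succ (by omega) hk, hu']
          simp only [mul_assoc, mul_inv_cancel_left, hJ.symm.left_comm]
      _ = upProd T 0 (n - 1 - k) * (stairProd T' n (k + 2) * (T (k + 1))⁻¹) := by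
          rw [ih (by omega), stairProd_succ T' n (k + 1), hu'']
          simp only [mul_assoc]
      _ = upProd T 0 (n - 1 - (k + 1)) * stairProd T' n (k + 2) := by
          rw [hsemi.inv_right.eq, hu]
          simp only [mul_assoc, mul_inv_cancel_left]

theorem prod_Jelt {k : ℕ} (hk : k ≤ n) :
    ((List.range k).map fun m => Jelt T n (m + 1)).prod =
      stairProd T n k * stairProd (fun i => T (n - i)) n k := by
  induction k with
  | zero => simp
  | succ k ih =>
    rw [List.prod_range_succ, ih (by omega), mul_assoc, R.stairProd_reflect_mul_Jelt hCn hk,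
      ← mul_assoc, ← stairProd_succ]

end CBraidRels

end Group

theorem Z_properties_general {G : Type*} [Group G] (n : ℕ) (T : ℕ → G) (U : G)
    (hbraid : ∀ i, 1 ≤ i → i ≤ n - 2 →
      T i * T (i + 1) * T i = T (i + 1) * T i * T (i + 1))
    (hcomm : ∀ i j, i ≤ n → j ≤ n → i + 2 ≤ j → T i * T j = T j * T i)
    (hC0 : T 1 * T 0 * T 1 * T 0 = T 0 * T 1 * T 0 * T 1)
    (hCn : T (n - 1) * T n * T (n - 1) * T n = T n * T (n - 1) * T n * T (n - 1))
    (hU : ∀ i, i ≤ n → U * T i * U⁻¹ = T (n - i)) :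
    (∀ i, 1 ≤ i → i ≤ n - 1 → Zelt T U n * T i = T i * Zelt T U n) ∧
    Zelt T U n * upProd T 0 n = upProd T 0 n * Zelt T U n ∧
    Zelt T U n * Zelt T U n =
      ((List.range n).map fun m => Jelt T n (m + 1)).prod * (U * U) := by
  have R : CBraidRels n T := ⟨fun i hi hin => hbraid i hi (by omega), hcomm, hC0⟩
  have hUT : ∀ i, i ≤ n → SemiconjBy U (T i) (T (n - i)) := fun i hi =>
    mul_inv_eq_iff_eq_mul.mp (hU i hi)
  have hZ : Zelt T U n = stairProd T n n * U := rfl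
  refine ⟨fun i hi hin => ?_, ?_, ?_⟩
  · have hV := R.semiconjBy_stairProd_self (i := n - i) (by omega) (by omega)
    rw [Nat.sub_sub_self (by omega)] at hV
    exact hV.mul_left (hUT i (by omega))
  · have hUX := semiconjBy_upProd T (a := 0) (b := n) fun k _ hk => hUT k hk
    rw [upProd_sub_eq_downProd T le_rfl, Nat.sub_self] at hUX
    exact SemiconjBy.mul_left (R.stairProd_self_mul_downProd le_rfl) hUX
  · have hUV := semiconjBy_stairProd T hUT n
    rw [R.prod_Jelt hCn le_rfl, hZ]
    calc stairProd T n n * U * (stairProd T n n * U)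
        = stairProd T n n * (U * stairProd T n n) * U := by simp only [mul_assoc]
      _ = _ := by rw [hUV.eq]; simp only [mul_assoc]

/-- In the extended affine braid group `B̂(C_n⁽¹⁾)`, the element `Z` commutes with
`T_1, …, T_{n-1}` and with `X = T_0 ⋯ T_n`, and `Z² = J_1 ⋯ J_n · U²`. -/
theorem Z_properties {G : Type*} [Group G] (n : ℕ) (hn : 2 ≤ n) (T : ℕ → G) (U : G)
    (hbraid : ∀ i, 1 ≤ i → i ≤ n - 2 →
      T i * T (i + 1) * T i = T (i + 1) * T i * T (i + 1))
    (hcomm : ∀ i j, i ≤ n → j ≤ n → i + 2 ≤ j → T i * T j = T j * T i)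
    (hC0 : T 1 * T 0 * T 1 * T 0 = T 0 * T 1 * T 0 * T 1)
    (hCn : T (n - 1) * T n * T (n - 1) * T n = T n * T (n - 1) * T n * T (n - 1))
    (hU : ∀ i, i ≤ n → U * T i * U⁻¹ = T (n - i)) :
    (∀ i, 1 ≤ i → i ≤ n - 1 → Zelt T U n * T i = T i * Zelt T U n) ∧
    Zelt T U n * upProd T 0 n = upProd T 0 n * Zelt T U n ∧
    Zelt T U n * Zelt T U n =
      ((List.range n).map fun m => Jelt T n (m + 1)).prod * (U * U) :=
  Z_properties_general n T U hbraid hcomm hC0 hCn hU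
end

section
/- For ε = ±1 and all i such that both i and i+ε lie in {1, …, n-1}, the following identities hold: κ_i T_{i+ε} T_i = T_{i+ε} T_i κ_{i+ε}; κ_i κ_{i+ε} κ_i = κ_i; (T_i - (q - q^{-1})) κ_{i+ε} (T_i - (q - q^{-1})) = (T_{i+ε} - (q - q^{-1})) κ_i (T_{i+ε} - (q - q^{-1})); T_{i+ε} κ_i T_{i+ε} = T_i^{-1} κ_{i+ε} T_i^{-1}; κ_i T_{i+ε} T_i = κ_i κ_{i+ε}; and κ_i T_{i+ε}^{-1} T_i^{-1} = κ_i κ_{i+ε}. -/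
/-!
The braid relation `x y x = y x y` says that `y x` conjugates `y` into `x`, and `x y` conjugates
`x` into `y`; since `κ` is a linear combination of `1`, `T` and `T⁻¹`, they conjugate `κ_y`
into `κ_x` and `κ_x` into `κ_y` as well. Combined with the absorption rule `κ_x x^{±1} = ν^{±1} κ_x`
and the sandwich rule `κ_x y^{±1} κ_x = ν^{∓1} κ_x`, this collapses every word in which `κ_y`
sits next to `κ_x`. For the third identity one rewrites `x - (q - q⁻¹)` as
`x⁻¹ - (q - q⁻¹) κ_x` and reduces to the other ones.
-/

/-- The BMW element `κ = 1 - (T - T⁻¹)/(q - q⁻¹)` attached to an invertible element `T`. -/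
noncomputable def kap {A : Type*} [Ring A] [Algebra ℂ A] (q : ℂ) (x : Aˣ) : A :=
  1 - (q - q⁻¹)⁻¹ • ((x : A) - ((x⁻¹ : Aˣ) : A))

/-- The six derived BMW identities for a pair of neighbouring generators `x = T_i`,
`y = T_{i+ε}`. -/
noncomputable def bmwSix {A : Type*} [Ring A] [Algebra ℂ A] (q : ℂ) (x y : Aˣ) : Prop :=
  kap q x * (y : A) * (x : A) = (y : A) * (x : A) * kap q y ∧
  kap q x * kap q y * kap q x = kap q x ∧
  ((x : A) - (q - q⁻¹) • (1 : A)) * kap q y * ((x : A) - (q - q⁻¹) • (1 : A)) =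
    ((y : A) - (q - q⁻¹) • (1 : A)) * kap q x * ((y : A) - (q - q⁻¹) • (1 : A)) ∧
  (y : A) * kap q x * (y : A) = ((x⁻¹ : Aˣ) : A) * kap q y * ((x⁻¹ : Aˣ) : A) ∧
  kap q x * (y : A) * (x : A) = kap q x * kap q y ∧
  kap q x * ((y⁻¹ : Aˣ) : A) * ((x⁻¹ : Aˣ) : A) = kap q x * kap q y

theorem sub_inv_ne_zero_of_sq_ne_one {K : Type*} [Field K] {q : K} (hq0 : q ≠ 0)
    (hq1 : q ^ 2 ≠ 1) : q - q⁻¹ ≠ 0 := by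
  rw [sub_ne_zero]
  contrapose! hq1
  rw [sq]
  nth_rewrite 2 [hq1]
  exact mul_inv_cancel₀ hq0

theorem semiconjBy_mul_of_braid {M : Type*} [Semigroup M] {x y : M} (h : x * y * x = y * x * y) :
    SemiconjBy (y * x) y x := by
  rw [SemiconjBy, ← mul_assoc, h]

section Absorption

variable {𝕜 A : Type*} [Field 𝕜] [Ring A] [Algebra 𝕜 A] {ν : 𝕜} {x : Aˣ} {k : A}

theorem mul_inv_eq_inv_smul_of_mul_eq_smul (h : k * x = ν • k) :
    k * ↑x⁻¹ = ν⁻¹ • k := by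
  have hk : k = ν • (k * ↑x⁻¹) := by rw [← smul_mul_assoc, ← h, Units.mul_inv_cancel_right]
  rcases eq_or_ne ν 0 with rfl | hν
  · rw [zero_smul] at hk
    simp [hk]
  · exact ((inv_smul_eq_iff₀ hν).mpr hk).symm

theorem smul_inv_smul_of_mul_eq_smul (h : k * x = ν • k) : ν • ν⁻¹ • k = k := by
  rw [← mul_inv_eq_inv_smul_of_mul_eq_smul h, ← smul_mul_assoc, ← h, Units.mul_inv_cancel_right]

theorem inv_smul_smul_of_mul_eq_smul (h : k * x = ν • k) : ν⁻¹ • ν • k = k := by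
  rw [← h, ← smul_mul_assoc, ← mul_inv_eq_inv_smul_of_mul_eq_smul h, Units.inv_mul_cancel_right]

end Absorption

section BMW

variable {A : Type*} [Ring A] [Algebra ℂ A] {q ν : ℂ} {x y : Aˣ}

theorem mul_kap (a : A) :
    a * kap q y = a - (q - q⁻¹)⁻¹ • (a * y) + (q - q⁻¹)⁻¹ • (a * ↑y⁻¹) := by
  simp only [kap, mul_sub, mul_one, mul_smul_comm, smul_sub]
  abel

theorem SemiconjBy.kap {g : Aˣ} (h : SemiconjBy g y x) :
    SemiconjBy (g : A) (kap q y) (kap q x) := by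
  have hval : SemiconjBy (g : A) y x := h.units_val
  have hinv : SemiconjBy (g : A) ↑y⁻¹ ↑x⁻¹ := h.inv_right.units_val
  exact (SemiconjBy.one_right _).sub_right ((hval.sub_right hinv).smul_right _)

theorem sub_smul_one_eq_inv_sub_smul_kap (hc : q - q⁻¹ ≠ 0) :
    (x : A) - (q - q⁻¹) • 1 = ↑x⁻¹ - (q - q⁻¹) • kap q x := by
  rw [kap, smul_sub, smul_smul, mul_inv_cancel₀ hc, one_smul]
  abel

theorem kap_mul_mul_eq_mul_mul_kap (h : x * y * x = y * x * y) :
    kap q x * y * x = y * x * kap q y := by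
  have hconj := (semiconjBy_mul_of_braid h).kap (q := q)
  push_cast at hconj
  rw [mul_assoc, hconj.eq]

theorem kap_mul_mul_eq_kap_mul_kap (hbr : x * y * x = y * x * y) (hx : kap q x * x = ν • kap q x)
    (hxy : kap q x * ↑y⁻¹ * kap q x = ν • kap q x) :
    kap q x * y * x = kap q x * kap q y := by
  calc kap q x * y * x = (ν⁻¹ • ν • kap q x) * y * x := by rw [inv_smul_smul_of_mul_eq_smul hx]
    _ = (ν⁻¹ • kap q x) * ↑y⁻¹ * (kap q x * y * x) := by
        rw [← hxy]
        simp only [smul_mul_assoc, mul_assoc]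
    _ = kap q x * ↑x⁻¹ * ↑y⁻¹ * (y * x * kap q y) := by
        rw [mul_inv_eq_inv_smul_of_mul_eq_smul hx, kap_mul_mul_eq_mul_mul_kap hbr]
    _ = kap q x * kap q y := by
        simp only [mul_assoc, Units.inv_mul_cancel_left]

theorem kap_mul_inv_mul_inv_eq_kap_mul_kap (hbr : x * y * x = y * x * y)
    (hx : kap q x * x = ν • kap q x) (hxy : kap q x * y * kap q x = ν⁻¹ • kap q x) :
    kap q x * ↑y⁻¹ * ↑x⁻¹ = kap q x * kap q y := by
  calc kap q x * ↑y⁻¹ * ↑x⁻¹ = (ν • ν⁻¹ • kap q x) * ↑y⁻¹ * ↑x⁻¹ := by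
        rw [smul_inv_smul_of_mul_eq_smul hx]
    _ = (ν • kap q x) * y * (kap q x * ↑y⁻¹ * ↑x⁻¹) := by
        rw [← hxy]
        simp only [smul_mul_assoc, mul_assoc]
    _ = kap q x * (kap q y * x * y) * ↑y⁻¹ * ↑x⁻¹ := by
        rw [← hx, kap_mul_mul_eq_mul_mul_kap hbr.symm]
        simp only [mul_assoc]
    _ = kap q x * kap q y := by
        simp only [mul_assoc, Units.mul_inv, mul_one]

theorem kap_mul_kap_mul_kap (hx : kap q x * x = ν • kap q x)
    (hxy : kap q x * y * kap q x = ν⁻¹ • kap q x)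
    (hxy_inv : kap q x * ↑y⁻¹ * kap q x = ν • kap q x) :
    kap q x * kap q y * kap q x = kap q x := by
  rw [mul_kap (kap q x)]
  simp only [sub_mul, add_mul, smul_mul_assoc]
  rw [hxy, hxy_inv, mul_kap (kap q x), hx, mul_inv_eq_inv_smul_of_mul_eq_smul hx]
  module

theorem mul_kap_eq_inv_mul_kap_mul_kap (hbr : x * y * x = y * x * y)
    (hy : kap q y * y = ν • kap q y) (hyx_inv : kap q y * ↑x⁻¹ * kap q y = ν • kap q y) :
    (y : A) * kap q x = ↑x⁻¹ * kap q y * kap q x := by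
  calc (y : A) * kap q x = ↑x⁻¹ * (x * y * kap q x) := by
        simp only [mul_assoc, Units.inv_mul_cancel_left]
    _ = ↑x⁻¹ * (kap q y * x * y) := by rw [kap_mul_mul_eq_mul_mul_kap hbr.symm]
    _ = ↑x⁻¹ * kap q y * kap q x := by
        rw [kap_mul_mul_eq_kap_mul_kap hbr.symm hy hyx_inv, mul_assoc]

theorem mul_kap_mul_eq_inv_mul_kap_mul_inv (hbr : x * y * x = y * x * y)
    (hy : kap q y * y = ν • kap q y)
    (hyx : kap q y * x * kap q y = ν⁻¹ • kap q y)
    (hyx_inv : kap q y * ↑x⁻¹ * kap q y = ν • kap q y) :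
    (y : A) * kap q x * y = ↑x⁻¹ * kap q y * ↑x⁻¹ := by
  calc (y : A) * kap q x * y = ↑x⁻¹ * (kap q y * kap q x) * y := by
        rw [mul_kap_eq_inv_mul_kap_mul_kap hbr hy hyx_inv, mul_assoc _ (kap q y)]
    _ = ↑x⁻¹ * (kap q y * ↑x⁻¹ * ↑y⁻¹) * y := by
        rw [kap_mul_inv_mul_inv_eq_kap_mul_kap hbr.symm hy hyx]
    _ = ↑x⁻¹ * kap q y * ↑x⁻¹ := by
        simp only [mul_assoc, Units.inv_mul, mul_one]

theorem sub_mul_kap_mul_sub_eq (hc : q - q⁻¹ ≠ 0) (hbr : x * y * x = y * x * y)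
    (hx : kap q x * x = ν • kap q x) (hy : kap q y * y = ν • kap q y)
    (hxy : kap q x * y * kap q x = ν⁻¹ • kap q x)
    (hxy_inv : kap q x * ↑y⁻¹ * kap q x = ν • kap q x)
    (hyx : kap q y * x * kap q y = ν⁻¹ • kap q y)
    (hyx_inv : kap q y * ↑x⁻¹ * kap q y = ν • kap q y) :
    ((x : A) - (q - q⁻¹) • 1) * kap q y * ((x : A) - (q - q⁻¹) • 1) =
      ((y : A) - (q - q⁻¹) • 1) * kap q x * ((y : A) - (q - q⁻¹) • 1) := by
  have hyk : (y : A) * kap q x = ↑x⁻¹ * kap q y * kap q x :=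
    mul_kap_eq_inv_mul_kap_mul_kap hbr hy hyx_inv
  have hky : kap q x * y = kap q x * kap q y * ↑x⁻¹ := by
    rw [← kap_mul_mul_eq_kap_mul_kap hbr hx hxy_inv]
    simp only [mul_assoc, Units.mul_inv, mul_one]
  rw [sub_smul_one_eq_inv_sub_smul_kap hc]
  simp only [sub_mul, mul_sub, smul_mul_assoc, mul_smul_comm, smul_sub, smul_smul, one_mul,
    mul_one]
  rw [mul_kap_mul_eq_inv_mul_kap_mul_inv hbr hy hyx hyx_inv, hyk, hky,
    kap_mul_kap_mul_kap hx hxy hxy_inv]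

theorem bmwSix_of_braid (hc : q - q⁻¹ ≠ 0) (hbr : x * y * x = y * x * y)
    (hx : kap q x * x = ν • kap q x) (hy : kap q y * y = ν • kap q y)
    (hxy : kap q x * y * kap q x = ν⁻¹ • kap q x)
    (hxy_inv : kap q x * ↑y⁻¹ * kap q x = ν • kap q x)
    (hyx : kap q y * x * kap q y = ν⁻¹ • kap q y)
    (hyx_inv : kap q y * ↑x⁻¹ * kap q y = ν • kap q y) :
    bmwSix q x y :=
  ⟨kap_mul_mul_eq_mul_mul_kap hbr, kap_mul_kap_mul_kap hx hxy hxy_inv,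
    sub_mul_kap_mul_sub_eq hc hbr hx hy hxy hxy_inv hyx hyx_inv,
    mul_kap_mul_eq_inv_mul_kap_mul_inv hbr hy hyx hyx_inv,
    kap_mul_mul_eq_kap_mul_kap hbr hx hxy_inv, kap_mul_inv_mul_inv_eq_kap_mul_kap hbr hx hxy⟩

end BMW

theorem bmw_derived_identities_general {A : Type*} [Ring A] [Algebra ℂ A] (n : ℕ)
    (q ν : ℂ) (hq0 : q ≠ 0) (hq1 : q ^ 2 ≠ 1)
    (T : ℕ → Aˣ)
    (hbraid : ∀ i, 1 ≤ i → i + 2 ≤ n →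
      (T i : A) * (T (i + 1) : A) * (T i : A) = (T (i + 1) : A) * (T i : A) * (T (i + 1) : A))
    (hκT : ∀ i, 1 ≤ i → i + 1 ≤ n →
      kap q (T i) * (T i : A) = ν • kap q (T i) ∧ (T i : A) * kap q (T i) = ν • kap q (T i))
    (hκdown : ∀ i, 2 ≤ i → i + 1 ≤ n →
      kap q (T i) * (T (i - 1) : A) * kap q (T i) = ν⁻¹ • kap q (T i) ∧
      kap q (T i) * (((T (i - 1))⁻¹ : Aˣ) : A) * kap q (T i) = ν • kap q (T i))
    (hκup : ∀ i, 1 ≤ i → i + 2 ≤ n →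
      kap q (T i) * (T (i + 1) : A) * kap q (T i) = ν⁻¹ • kap q (T i) ∧
      kap q (T i) * (((T (i + 1))⁻¹ : Aˣ) : A) * kap q (T i) = ν • kap q (T i)) :
    (∀ i, 1 ≤ i → i + 2 ≤ n → bmwSix q (T i) (T (i + 1))) ∧
    (∀ i, 2 ≤ i → i + 1 ≤ n → bmwSix q (T i) (T (i - 1))) := by
  have hc := sub_inv_ne_zero_of_sq_ne_one hq0 hq1
  have braid : ∀ i, 1 ≤ i → i + 2 ≤ n → T i * T (i + 1) * T i = T (i + 1) * T i * T (i + 1) :=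
    fun i h1 h2 => Units.ext (by simpa using hbraid i h1 h2)
  refine ⟨fun i h1 h2 => ?_, fun i h1 h2 => ?_⟩
  · have hdown := hκdown (i + 1) (by omega) (by omega)
    rw [Nat.add_sub_cancel] at hdown
    exact bmwSix_of_braid hc (braid i h1 h2) (hκT i h1 (by omega)).1
      (hκT (i + 1) (by omega) h2).1 (hκup i h1 h2).1 (hκup i h1 h2).2 hdown.1 hdown.2
  · obtain ⟨j, rfl⟩ : ∃ j, i = j + 1 := ⟨i - 1, by omega⟩
    have hdown := hκdown (j + 1) h1 h2
    rw [Nat.add_sub_cancel] at hdown ⊢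
    exact bmwSix_of_braid hc (braid j (by omega) h2).symm (hκT (j + 1) (by omega) h2).1
      (hκT j (by omega) (by omega)).1 hdown.1 hdown.2 (hκup j (by omega) h2).1
      (hκup j (by omega) h2).2

/-- In the Birman–Murakami–Wenzl algebra, the identities (2.9)–(2.14) of the paper hold
for `ε = +1` (first block) and `ε = -1` (second block). -/
theorem bmw_derived_identities {A : Type*} [Ring A] [Algebra ℂ A] (n : ℕ) (hn : 3 ≤ n)
    (q ν : ℂ) (hq0 : q ≠ 0) (hν0 : ν ≠ 0) (hq1 : q ^ 2 ≠ 1)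
    (T : ℕ → Aˣ)
    (hbraid : ∀ i, 1 ≤ i → i + 2 ≤ n →
      (T i : A) * (T (i + 1) : A) * (T i : A) = (T (i + 1) : A) * (T i : A) * (T (i + 1) : A))
    (hcomm : ∀ i j, 1 ≤ i → j + 1 ≤ n → i + 2 ≤ j → (T i : A) * (T j : A) = (T j : A) * (T i : A))
    (hκT : ∀ i, 1 ≤ i → i + 1 ≤ n →
      kap q (T i) * (T i : A) = ν • kap q (T i) ∧ (T i : A) * kap q (T i) = ν • kap q (T i))
    (hκdown : ∀ i, 2 ≤ i → i + 1 ≤ n →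
      kap q (T i) * (T (i - 1) : A) * kap q (T i) = ν⁻¹ • kap q (T i) ∧
      kap q (T i) * (((T (i - 1))⁻¹ : Aˣ) : A) * kap q (T i) = ν • kap q (T i))
    (hκup : ∀ i, 1 ≤ i → i + 2 ≤ n →
      kap q (T i) * (T (i + 1) : A) * kap q (T i) = ν⁻¹ • kap q (T i) ∧
      kap q (T i) * (((T (i + 1))⁻¹ : Aˣ) : A) * kap q (T i) = ν • kap q (T i)) :
    (∀ i, 1 ≤ i → i + 2 ≤ n → bmwSix q (T i) (T (i + 1))) ∧
    (∀ i, 2 ≤ i → i + 1 ≤ n → bmwSix q (T i) (T (i - 1))) :=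
  bmw_derived_identities_general n q ν hq0 hq1 T hbraid hκT hκdown hκup
end

section
/- For every 1 ≤ i ≤ n-2 and all nonzero complex numbers u₁, u₂, u₃ that are pairwise distinct and satisfy ν u₂ + q u₃ ≠ 0, ν u₁ + q u₃ ≠ 0, ν u₁ + q u₂ ≠ 0, the baxterized elements satisfy the braid (Yang–Baxter) relation T_i(u₂,u₃) T_{i+1}(u₁,u₃) T_i(u₁,u₂) = T_{i+1}(u₁,u₂) T_i(u₁,u₃) T_{i+1}(u₂,u₃). -/
/-- The baxterized element
`T(u,v) = T + (q - q⁻¹)/(v/u - 1) + (q - q⁻¹)/(1 + ν⁻¹ q v/u) · κ`. -/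
noncomputable def bax {A : Type*} [Ring A] [Algebra ℂ A] (q ν : ℂ) (x : Aˣ) (u v : ℂ) : A :=
  (x : A) + ((q - q⁻¹) / (v / u - 1)) • (1 : A) +
    ((q - q⁻¹) / (1 + ν⁻¹ * q * v / u)) • kap q x

/-! Put `X = T i`, `Y = T (i + 1)`. Since `X⁻¹ = X - (q - q⁻¹) + (q - q⁻¹) κ_X`, the BMW relations
reduce every word `a * b * c` with `a, c ∈ {X, 1, κ_X}` and `b ∈ {Y, 1, κ_Y}` to a combination of the
fifteen words `1, X, Y, XY, YX, XYX, κ_X, κ_Y, κ_X κ_Y, κ_Y κ_X, κ_X Y, Y κ_X, X κ_Y, κ_Y X, Y κ_X Y`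
(a basis of the BMW algebra on three strands). The right-hand side of the Yang–Baxter equation is
the same expansion with `X` and `Y` exchanged, brought back to these words by `YXY = XYX` and the
relation for `X κ_Y X`; the two sides then agree coefficientwise, by rational identities in
`q, ν, u₁, u₂, u₃`. -/

section

variable {A : Type*} [Ring A] [Algebra ℂ A] {q ν : ℂ}

theorem coe_inv_eq_sub_add_kap (hq : q - q⁻¹ ≠ 0) (X : Aˣ) :
    ((X⁻¹ : Aˣ) : A) = X - (q - q⁻¹) • 1 + (q - q⁻¹) • kap q X := by
  rw [kap, smul_sub, smul_smul, mul_inv_cancel₀ hq, one_smul]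
  abel

section Generator

variable {X : Aˣ}

theorem mul_self_eq_of_mul_kap (hq : q - q⁻¹ ≠ 0) (hXk : (X : A) * kap q X = ν • kap q X) :
    (X : A) * X = 1 + (q - q⁻¹) • (X : A) - ((q - q⁻¹) * ν) • kap q X := by
  have h := X.mul_inv
  rw [coe_inv_eq_sub_add_kap hq, mul_add, mul_sub, mul_smul_comm, mul_smul_comm, hXk,
    mul_one, smul_smul] at h
  rw [← h]
  abel

theorem kap_mul_coe_inv (hν : ν ≠ 0) (hkX : kap q X * X = ν • kap q X) :
    kap q X * ((X⁻¹ : Aˣ) : A) = ν⁻¹ • kap q X := by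
  calc kap q X * ((X⁻¹ : Aˣ) : A) = ν⁻¹ • (kap q X * X * ((X⁻¹ : Aˣ) : A)) := by
        rw [hkX, smul_mul_assoc, smul_smul, inv_mul_cancel₀ hν, one_smul]
    _ = ν⁻¹ • kap q X := by rw [mul_assoc, X.mul_inv, mul_one]

theorem kap_mul_self (hν : ν ≠ 0) (hkX : kap q X * X = ν • kap q X) :
    kap q X * kap q X = (1 - (q - q⁻¹)⁻¹ * (ν - ν⁻¹)) • kap q X := by
  nth_rewrite 2 [kap]
  rw [mul_sub, mul_one, mul_smul_comm, mul_sub, hkX, kap_mul_coe_inv hν hkX]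
  module

end Generator

/-- The relations of the BMW algebra on three strands between two consecutive generators. -/
structure IsBMWPair (q ν : ℂ) (X Y : Aˣ) : Prop where
  braid : (X : A) * Y * X = Y * X * Y
  kap_mul_left : kap q X * X = ν • kap q X
  mul_kap_left : (X : A) * kap q X = ν • kap q X
  kap_mul_right : kap q Y * Y = ν • kap q Y
  mul_kap_right : (Y : A) * kap q Y = ν • kap q Y
  kap_mul_right_mul_kap : kap q X * Y * kap q X = ν⁻¹ • kap q X
  kap_mul_right_inv_mul_kap : kap q X * ((Y⁻¹ : Aˣ) : A) * kap q X = ν • kap q X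
  kap_mul_left_mul_kap : kap q Y * X * kap q Y = ν⁻¹ • kap q Y
  kap_mul_left_inv_mul_kap : kap q Y * ((X⁻¹ : Aˣ) : A) * kap q Y = ν • kap q Y

namespace IsBMWPair

variable {X Y : Aˣ}

theorem symm (h : IsBMWPair q ν X Y) : IsBMWPair q ν Y X :=
  ⟨h.braid.symm, h.kap_mul_right, h.mul_kap_right, h.kap_mul_left, h.mul_kap_left,
    h.kap_mul_left_mul_kap, h.kap_mul_left_inv_mul_kap, h.kap_mul_right_mul_kap,
    h.kap_mul_right_inv_mul_kap⟩

theorem mul_mul_coe_inv (h : IsBMWPair q ν X Y) :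
    (X : A) * Y * ((X⁻¹ : Aˣ) : A) = ((Y⁻¹ : Aˣ) : A) * X * Y := by
  have hb : X * Y * X = Y * X * Y := Units.ext (by simpa using h.braid)
  have : X * Y * X⁻¹ = Y⁻¹ * X * Y := by
    rw [mul_inv_eq_iff_eq_mul, mul_assoc, mul_assoc, eq_inv_mul_iff_mul_eq, ← mul_assoc,
      ← mul_assoc, hb]
  simpa using congrArg Units.val this

theorem mul_mul_kap (h : IsBMWPair q ν X Y) : (X : A) * Y * kap q X = kap q Y * X * Y := by
  simp only [kap, mul_sub, sub_mul, mul_one, one_mul, mul_smul_comm, smul_mul_assoc]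
  rw [h.braid, h.mul_mul_coe_inv]

theorem kap_mul_kap_mul_kap (h : IsBMWPair q ν X Y) (hν : ν ≠ 0) :
    kap q X * kap q Y * kap q X = kap q X := by
  have hY : kap q Y = 1 - (q - q⁻¹)⁻¹ • ((Y : A) - ((Y⁻¹ : Aˣ) : A)) := rfl
  rw [hY]
  simp only [mul_sub, sub_mul, mul_one, mul_smul_comm, smul_mul_assoc]
  rw [kap_mul_self hν h.kap_mul_left, h.kap_mul_right_mul_kap, h.kap_mul_right_inv_mul_kap]
  module

theorem kap_mul_kap_mul_mul (h : IsBMWPair q ν X Y) (hν : ν ≠ 0) :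
    kap q X * kap q Y * X * Y = kap q X := by
  calc kap q X * kap q Y * X * Y = kap q X * (kap q Y * X * Y) := by simp only [mul_assoc]
    _ = ν • (kap q X * Y * kap q X) := by
      rw [← h.mul_mul_kap, ← mul_assoc, ← mul_assoc, h.kap_mul_left, smul_mul_assoc,
        smul_mul_assoc]
    _ = kap q X := by
      rw [h.kap_mul_right_mul_kap, smul_smul, mul_inv_cancel₀ hν, one_smul]

theorem kap_mul_kap_mul (h : IsBMWPair q ν X Y) (hν : ν ≠ 0) :
    kap q X * kap q Y * X = kap q X * ((Y⁻¹ : Aˣ) : A) := by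
  calc kap q X * kap q Y * X = kap q X * kap q Y * X * Y * ((Y⁻¹ : Aˣ) : A) := by
        rw [mul_assoc _ (Y : A), Y.mul_inv, mul_one]
    _ = kap q X * ((Y⁻¹ : Aˣ) : A) := by rw [h.kap_mul_kap_mul_mul hν]

theorem kap_mul_kap (h : IsBMWPair q ν X Y) (hq : q - q⁻¹ ≠ 0) (hν : ν ≠ 0) :
    kap q X * kap q Y = kap q X * Y * X := by
  have e1 : kap q X * ((Y⁻¹ : Aˣ) : A) * X
      = kap q X * Y * X - ((q - q⁻¹) * ν) • kap q X + (q - q⁻¹) • (kap q X * kap q Y * X) := by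
    rw [coe_inv_eq_sub_add_kap hq Y]
    simp only [mul_add, mul_sub, add_mul, sub_mul, mul_smul_comm, smul_mul_assoc, mul_one,
      h.kap_mul_left, smul_smul]
  have e2 : kap q X * ((Y⁻¹ : Aˣ) : A) * ((X⁻¹ : Aˣ) : A)
      = kap q X * ((Y⁻¹ : Aˣ) : A) * X - (q - q⁻¹) • (kap q X * ((Y⁻¹ : Aˣ) : A))
        + ((q - q⁻¹) * ν) • kap q X := by
    rw [coe_inv_eq_sub_add_kap hq X]
    simp only [mul_add, mul_sub, mul_smul_comm, mul_one, h.kap_mul_right_inv_mul_kap, smul_smul]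
  calc kap q X * kap q Y = kap q X * ((Y⁻¹ : Aˣ) : A) * ((X⁻¹ : Aˣ) : A) := by
        rw [← h.kap_mul_kap_mul hν, mul_assoc _ (X : A), X.mul_inv, mul_one]
    _ = kap q X * Y * X := by
      rw [e2, e1, h.kap_mul_kap_mul hν]
      abel

theorem kap_mul_kap_mul_normal (h : IsBMWPair q ν X Y) (hq : q - q⁻¹ ≠ 0) (hν : ν ≠ 0) :
    kap q X * kap q Y * X
      = kap q X * Y - (q - q⁻¹) • kap q X + (q - q⁻¹) • (kap q X * kap q Y) := by
  rw [h.kap_mul_kap_mul hν, coe_inv_eq_sub_add_kap hq Y]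
  simp only [mul_add, mul_sub, mul_smul_comm, mul_one]

theorem mul_mul_kap_eq_kap_mul_kap (h : IsBMWPair q ν X Y) (hq : q - q⁻¹ ≠ 0) (hν : ν ≠ 0) :
    (X : A) * Y * kap q X = kap q Y * kap q X := by
  rw [h.mul_mul_kap, h.symm.kap_mul_kap hq hν]

theorem mul_kap_mul_kap (h : IsBMWPair q ν X Y) (hq : q - q⁻¹ ≠ 0) (hν : ν ≠ 0) :
    (X : A) * kap q Y * kap q X = ((Y⁻¹ : Aˣ) : A) * kap q X := by
  calc (X : A) * kap q Y * kap q X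
      = ((Y⁻¹ : Aˣ) : A) * ((Y : A) * X * kap q Y * kap q X) := by
        simp only [← mul_assoc, Y.inv_mul, one_mul]
    _ = ((Y⁻¹ : Aˣ) : A) * kap q X := by
        rw [h.symm.mul_mul_kap_eq_kap_mul_kap hq hν, h.kap_mul_kap_mul_kap hν]

theorem mul_kap_mul_kap_normal (h : IsBMWPair q ν X Y) (hq : q - q⁻¹ ≠ 0) (hν : ν ≠ 0) :
    (X : A) * kap q Y * kap q X
      = Y * kap q X - (q - q⁻¹) • kap q X + (q - q⁻¹) • (kap q Y * kap q X) := by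
  rw [h.mul_kap_mul_kap hq hν, coe_inv_eq_sub_add_kap hq Y]
  simp only [add_mul, sub_mul, smul_mul_assoc, one_mul]

theorem mul_kap_mul (h : IsBMWPair q ν X Y) (hq : q - q⁻¹ ≠ 0) (hν : ν ≠ 0) :
    (X : A) * kap q Y * X = ((Y⁻¹ : Aˣ) : A) * kap q X * ((Y⁻¹ : Aˣ) : A) := by
  calc (X : A) * kap q Y * X = (X : A) * (kap q Y * X * Y) * ((Y⁻¹ : Aˣ) : A) := by
        simp only [mul_assoc, Y.mul_inv, mul_one]
    _ = ((Y⁻¹ : Aˣ) : A) * kap q X * ((Y⁻¹ : Aˣ) : A) := by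
        rw [← h.symm.kap_mul_kap hq hν, ← mul_assoc, h.mul_kap_mul_kap hq hν]

theorem mul_kap_mul_normal (h : IsBMWPair q ν X Y) (hq : q - q⁻¹ ≠ 0) (hν : ν ≠ 0) :
    (X : A) * kap q Y * X
      = Y * kap q X * Y - (q - q⁻¹) • ((Y : A) * kap q X) - (q - q⁻¹) • (kap q X * Y)
        + (q - q⁻¹) • ((X : A) * kap q Y) + (q - q⁻¹) • (kap q Y * X)
        + ((q - q⁻¹) * (q - q⁻¹)) • kap q X - ((q - q⁻¹) * (q - q⁻¹)) • kap q Y := by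
  rw [h.mul_kap_mul hq hν, coe_inv_eq_sub_add_kap hq Y]
  simp only [add_mul, mul_add, sub_mul, mul_sub, smul_mul_assoc, mul_smul_comm, one_mul,
    mul_one, smul_add, smul_sub, smul_smul]
  rw [h.symm.mul_kap_mul_kap_normal hq hν, h.symm.kap_mul_kap_mul_normal hq hν,
    h.symm.kap_mul_kap_mul_kap hν]
  module

theorem triple_product (h : IsBMWPair q ν X Y) (hq : q - q⁻¹ ≠ 0) (hν : ν ≠ 0)
    (b₁ c₁ b₂ c₂ b₃ c₃ : ℂ) :
    ((X : A) + b₁ • 1 + c₁ • kap q X) * ((Y : A) + b₂ • 1 + c₂ • kap q Y)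
        * ((X : A) + b₃ • 1 + c₃ • kap q X) =
      (b₂ + b₁ * b₂ * b₃) • 1 + ((q - q⁻¹) * b₂ + b₂ * b₃ + b₁ * b₂) • (X : A)
      + (b₁ * b₃) • (Y : A) + b₃ • ((X : A) * Y) + b₁ • ((Y : A) * X) + (X : A) * Y * X
      + (-((q - q⁻¹) * ν * b₂) + ν * b₂ * c₃ + (q - q⁻¹) ^ 2 * c₂ - (q - q⁻¹) * c₂ * c₃
          + b₁ * b₂ * c₃ + ν⁻¹ * c₁ * c₃ + ν * c₁ * b₂ + c₁ * b₂ * b₃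
          + (1 - (q - q⁻¹)⁻¹ * (ν - ν⁻¹)) * c₁ * b₂ * c₃ - (q - q⁻¹) * c₁ * c₂
          + c₁ * c₂ * c₃) • kap q X
      + (-((q - q⁻¹) ^ 2 * c₂) + b₁ * c₂ * b₃) • kap q Y
      + (c₁ + (q - q⁻¹) * c₁ * c₂ + c₁ * c₂ * b₃) • (kap q X * kap q Y)
      + (c₃ + (q - q⁻¹) * c₂ * c₃ + b₁ * c₂ * c₃) • (kap q Y * kap q X)
      + (-((q - q⁻¹) * c₂) + c₁ * b₃ + c₁ * c₂) • (kap q X * Y)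
      + (-((q - q⁻¹) * c₂) + c₂ * c₃ + b₁ * c₃) • ((Y : A) * kap q X)
      + ((q - q⁻¹) * c₂ + c₂ * b₃) • ((X : A) * kap q Y)
      + ((q - q⁻¹) * c₂ + b₁ * c₂) • (kap q Y * X)
      + c₂ • ((Y : A) * kap q X * Y) := by
  simp only [add_mul, mul_add, smul_mul_assoc, mul_smul_comm, mul_one, one_mul]
  simp only [mul_self_eq_of_mul_kap hq h.mul_kap_left, h.mul_kap_left, h.kap_mul_left,
    kap_mul_self hν h.kap_mul_left, h.kap_mul_right_mul_kap, h.kap_mul_kap_mul_kap hν,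
    h.mul_mul_kap_eq_kap_mul_kap hq hν, (h.kap_mul_kap hq hν).symm,
    h.kap_mul_kap_mul_normal hq hν, h.mul_kap_mul_kap_normal hq hν, h.mul_kap_mul_normal hq hν]
  match_scalars <;> ring

end IsBMWPair

theorem bax_eq (hν : ν ≠ 0) {u : ℂ} (hu : u ≠ 0) (v : ℂ) (x : Aˣ) :
    bax q ν x u v = (x : A) + ((q - q⁻¹) * u / (v - u)) • 1
      + ((q - q⁻¹) * ν * u / (ν * u + q * v)) • kap q x := by
  have hb : (q - q⁻¹) / (v / u - 1) = (q - q⁻¹) * u / (v - u) := by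
    rw [div_sub_one hu, div_div_eq_mul_div]
  have hc : (q - q⁻¹) / (1 + ν⁻¹ * q * v / u) = (q - q⁻¹) * ν * u / (ν * u + q * v) := by
    rw [show 1 + ν⁻¹ * q * v / u = (ν * u + q * v) / (ν * u) by field_simp,
      div_div_eq_mul_div, mul_assoc]
  rw [bax, hb, hc]

end

theorem bax_yang_baxter_general {A : Type*} [Ring A] [Algebra ℂ A] (n : ℕ)
    (q ν : ℂ) (hq0 : q ≠ 0) (hν0 : ν ≠ 0) (hq1 : q ^ 2 ≠ 1)
    (T : ℕ → Aˣ)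
    (hbraid : ∀ i, 1 ≤ i → i + 2 ≤ n →
      (T i : A) * (T (i + 1) : A) * (T i : A) = (T (i + 1) : A) * (T i : A) * (T (i + 1) : A))
    (hκT : ∀ i, 1 ≤ i → i + 1 ≤ n →
      kap q (T i) * (T i : A) = ν • kap q (T i) ∧ (T i : A) * kap q (T i) = ν • kap q (T i))
    (hκdown : ∀ i, 2 ≤ i → i + 1 ≤ n →
      kap q (T i) * (T (i - 1) : A) * kap q (T i) = ν⁻¹ • kap q (T i) ∧
      kap q (T i) * (((T (i - 1))⁻¹ : Aˣ) : A) * kap q (T i) = ν • kap q (T i))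
    (hκup : ∀ i, 1 ≤ i → i + 2 ≤ n →
      kap q (T i) * (T (i + 1) : A) * kap q (T i) = ν⁻¹ • kap q (T i) ∧
      kap q (T i) * (((T (i + 1))⁻¹ : Aˣ) : A) * kap q (T i) = ν • kap q (T i)) :
    ∀ i, 1 ≤ i → i + 2 ≤ n → ∀ u₁ u₂ u₃ : ℂ,
      u₁ ≠ 0 → u₂ ≠ 0 → u₃ ≠ 0 → u₁ ≠ u₂ → u₁ ≠ u₃ → u₂ ≠ u₃ →
      ν * u₂ + q * u₃ ≠ 0 → ν * u₁ + q * u₃ ≠ 0 → ν * u₁ + q * u₂ ≠ 0 →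
      bax q ν (T i) u₂ u₃ * bax q ν (T (i + 1)) u₁ u₃ * bax q ν (T i) u₁ u₂ =
        bax q ν (T (i + 1)) u₁ u₂ * bax q ν (T i) u₁ u₃ * bax q ν (T (i + 1)) u₂ u₃ := by
  intro i hi hin u₁ u₂ u₃ hu₁ hu₂ _ h12 h13 h23 hn23 hn13 hn12
  have hq : q - q⁻¹ ≠ 0 := by
    intro h
    field_simp at h
    exact hq1 (by linear_combination h)
  have hdown := hκdown (i + 1) (by omega) (by omega)
  rw [Nat.add_sub_cancel] at hdown
  have hP : IsBMWPair q ν (T i) (T (i + 1)) :=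
    ⟨hbraid i hi hin, (hκT i hi (by omega)).1, (hκT i hi (by omega)).2,
      (hκT (i + 1) (by omega) (by omega)).1, (hκT (i + 1) (by omega) (by omega)).2,
      (hκup i hi hin).1, (hκup i hi hin).2, hdown.1, hdown.2⟩
  simp only [bax_eq hν0 hu₁, bax_eq hν0 hu₂]
  rw [hP.triple_product hq hν0, hP.symm.triple_product hq hν0, ← hP.braid,
    hP.mul_kap_mul_normal hq hν0]
  have h32 : u₃ - u₂ ≠ 0 := sub_ne_zero.mpr h23.symm
  have h31 : u₃ - u₁ ≠ 0 := sub_ne_zero.mpr h13.symm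
  have h21 : u₂ - u₁ ≠ 0 := sub_ne_zero.mpr h12.symm
  match_scalars <;> field_simp <;> ring

/-- The baxterized elements of the Birman–Murakami–Wenzl algebra satisfy the Yang–Baxter
(braid) relation. -/
theorem bax_yang_baxter {A : Type*} [Ring A] [Algebra ℂ A] (n : ℕ) (hn : 3 ≤ n)
    (q ν : ℂ) (hq0 : q ≠ 0) (hν0 : ν ≠ 0) (hq1 : q ^ 2 ≠ 1)
    (T : ℕ → Aˣ)
    (hbraid : ∀ i, 1 ≤ i → i + 2 ≤ n →
      (T i : A) * (T (i + 1) : A) * (T i : A) = (T (i + 1) : A) * (T i : A) * (T (i + 1) : A))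
    (hcomm : ∀ i j, 1 ≤ i → j + 1 ≤ n → i + 2 ≤ j → (T i : A) * (T j : A) = (T j : A) * (T i : A))
    (hκT : ∀ i, 1 ≤ i → i + 1 ≤ n →
      kap q (T i) * (T i : A) = ν • kap q (T i) ∧ (T i : A) * kap q (T i) = ν • kap q (T i))
    (hκdown : ∀ i, 2 ≤ i → i + 1 ≤ n →
      kap q (T i) * (T (i - 1) : A) * kap q (T i) = ν⁻¹ • kap q (T i) ∧
      kap q (T i) * (((T (i - 1))⁻¹ : Aˣ) : A) * kap q (T i) = ν • kap q (T i))
    (hκup : ∀ i, 1 ≤ i → i + 2 ≤ n →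
      kap q (T i) * (T (i + 1) : A) * kap q (T i) = ν⁻¹ • kap q (T i) ∧
      kap q (T i) * (((T (i + 1))⁻¹ : Aˣ) : A) * kap q (T i) = ν • kap q (T i)) :
    ∀ i, 1 ≤ i → i + 2 ≤ n → ∀ u₁ u₂ u₃ : ℂ,
      u₁ ≠ 0 → u₂ ≠ 0 → u₃ ≠ 0 → u₁ ≠ u₂ → u₁ ≠ u₃ → u₂ ≠ u₃ →
      ν * u₂ + q * u₃ ≠ 0 → ν * u₁ + q * u₃ ≠ 0 → ν * u₁ + q * u₂ ≠ 0 →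
      bax q ν (T i) u₂ u₃ * bax q ν (T (i + 1)) u₁ u₃ * bax q ν (T i) u₁ u₂ =
        bax q ν (T (i + 1)) u₁ u₂ * bax q ν (T i) u₁ u₃ * bax q ν (T (i + 1)) u₂ u₃ :=
  bax_yang_baxter_general n q ν hq0 hν0 hq1 T hbraid hκT hκdown hκup
end
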